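/- Let α > 2 and β > 0, let φ be an analytic self-map of the open unit disk D, and let g be analytic on D. Then the operator U_gC_φ, defined by (U_gC_φ f)(z) = ∫₀^z f(φ(ξ)) g'(ξ) dξ, is bounded from Z^α to Z^β if and only if sup_{z∈D} (1−|z|²)^β |g'(z)φ'(z)| / (1−|φ(z)|²)^{α−1} < ∞ and sup_{z∈D} (1−|z|²)^β |g''(z)| / (1−|φ(z)|²)^{α−2} < ∞. -/

import Mathlib

noncomputable section

/-- The open unit disk in the complex plane. -/
def uD : Set ℂ := Metric.ball 0 1

/-- The Zygmund-type quantity `(1-|z|^2)^a * |f''(z)|`. -/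
def zygS (a : ℝ) (f : ℂ → ℂ) (z : ℂ) : ℝ := (1 - ‖z‖ ^ 2) ^ a * ‖deriv (deriv f) z‖

/-- Membership in the Zygmund-type space `Z^a`. -/
def memZ (a : ℝ) (f : ℂ → ℂ) : Prop :=
  AnalyticOn ℂ f uD ∧ ∃ M : ℝ, ∀ z ∈ uD, zygS a f z ≤ M

/-- The Zygmund-type norm `‖f‖_{Z^a} = |f 0| + |f' 0| + sup_{z ∈ D} (1-|z|^2)^a |f''(z)|`. -/
def zNorm (a : ℝ) (f : ℂ → ℂ) : ℝ := ‖f 0‖ + ‖deriv f 0‖ + sSup (zygS a f '' uD)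

/-- Membership in the weighted space `H^∞_{v_b}` (for `u` analytic on `uD`). -/
def memHv (b : ℝ) (u : ℂ → ℂ) : Prop :=
  ∃ M : ℝ, ∀ z ∈ uD, (1 - ‖z‖ ^ 2) ^ b * ‖u z‖ ≤ M

/-- `T` is a bounded operator from `Z^a` to `Z^b`. -/
def boundedOp (a b : ℝ) (T : (ℂ → ℂ) → ℂ → ℂ) : Prop :=
  (∀ f, memZ a f → memZ b (T f)) ∧
    ∃ C > 0, ∀ f, memZ a f → zNorm b (T f) ≤ C * zNorm a f

/-- `(U_g C_φ f)(z) = ∫₀^z f(φ(ξ)) g'(ξ) dξ`, parametrized along the segment from `0` to `z`. -/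
def UgCphi (g φ : ℂ → ℂ) (f : ℂ → ℂ) : ℂ → ℂ :=
  fun z => ∫ t in (0:ℝ)..1, z * (f (φ ((t : ℂ) * z)) * deriv g ((t : ℂ) * z))

/-!
Write `T f = U_g C_φ f`, so that `(T f)' = f(φ) g'` and `(T f)'' = f'(φ) g' φ' + f(φ) g''`.

Sufficiency: integrating `f''` twice along radii gives, for `f ∈ Z^α` and `α > 2`,
`|f'(w)| ≲ ‖f‖ (1 - |w|²)^(1 - α)` and `|f(w)| ≲ ‖f‖ (1 - |w|²)^(2 - α)`, and these two growth
bounds pair off with the two conditions.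

Necessity: the test functions `(1 - |a|²)^c / (1 - ā z)^(α + c - 2)` for `c = 0, 1` have `Z^α`
norms bounded uniformly in `a`; at `a = φ(z)` both take the value `(1 - |a|²)^(2 - α)` while their
derivatives `(α + c - 2) ā (1 - |a|²)^(1 - α)` differ by `ā (1 - |a|²)^(1 - α)`. Subtracting the
two resulting estimates isolates the `g' φ'` term (with a factor `|φ(z)|`), and then the `g''`
term. Where `|φ(z)| < 1/2` the test function `f(z) = z` controls `g' φ'` instead.
-/

open Topology ComplexConjugate

lemma mem_uD_iff {z : ℂ} : z ∈ uD ↔ ‖z‖ < 1 := mem_ball_zero_iff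

lemma zero_mem_uD : (0 : ℂ) ∈ uD := mem_uD_iff.2 (by simp)

lemma ofReal_mul_mem_uD {t : ℝ} {z : ℂ} (ht₀ : 0 ≤ t) (ht₁ : t ≤ 1) (hz : z ∈ uD) :
    (t : ℂ) * z ∈ uD := by
  rw [mem_uD_iff] at hz ⊢
  rw [norm_mul, Complex.norm_real, Real.norm_of_nonneg ht₀]
  nlinarith [norm_nonneg z]

lemma one_sub_norm_sq_pos {z : ℂ} (hz : z ∈ uD) : 0 < 1 - ‖z‖ ^ 2 := by
  have := mem_uD_iff.1 hz
  nlinarith [norm_nonneg z]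

lemma radial_integral_eq_sub {H h : ℂ → ℂ} (hH : ∀ w ∈ uD, HasDerivAt H (h w) w)
    (hh : ContinuousOn h uD) {z : ℂ} (hz : z ∈ uD) :
    ∫ t in (0 : ℝ)..1, z * h (t * z) = H z - H 0 := by
  have hseg : ∀ t ∈ Set.uIcc (0 : ℝ) 1, (t : ℂ) * z ∈ uD := fun t ht => by
    rw [Set.uIcc_of_le zero_le_one] at ht
    exact ofReal_mul_mem_uD ht.1 ht.2 hz
  have hderiv : ∀ t ∈ Set.uIcc (0 : ℝ) 1,
      HasDerivAt (fun s : ℝ => H (s * z)) (z * h (t * z)) t := fun t ht => by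
    rw [mul_comm z]
    exact ((hH _ (hseg t ht)).comp (t : ℂ) (hasDerivAt_mul_const z)).comp_ofReal
  have hcont : ContinuousOn (fun t : ℝ => z * h (t * z)) (Set.uIcc 0 1) :=
    continuousOn_const.mul (hh.comp (by fun_prop) hseg)
  simpa using intervalIntegral.integral_eq_sub_of_hasDerivAt hderiv hcont.intervalIntegrable

lemma hasDerivAt_radial_integral {h : ℂ → ℂ} (hh : DifferentiableOn ℂ h uD) {z : ℂ}
    (hz : z ∈ uD) : HasDerivAt (fun z => ∫ t in (0 : ℝ)..1, z * h (t * z)) (h z) z := by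
  obtain ⟨H, hH⟩ := hh.isExactOn_ball
  have heq : (fun z => ∫ t in (0 : ℝ)..1, z * h (t * z)) =ᶠ[𝓝 z] fun z => H z - H 0 :=
    Filter.eventually_of_mem (Metric.isOpen_ball.mem_nhds hz) fun w hw =>
      radial_integral_eq_sub hH hh.continuousOn hw
  exact ((hH z hz).sub_const (H 0)).congr_of_eventuallyEq heq

section Weights

variable {z : ℂ} {p : ℝ}

lemma one_sub_norm_sq_rpow_le_one (hp : 0 ≤ p) (hz : z ∈ uD) : (1 - ‖z‖ ^ 2) ^ p ≤ 1 :=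
  Real.rpow_le_one (one_sub_norm_sq_pos hz).le (by nlinarith [norm_nonneg z]) hp

lemma le_div_one_sub_norm_sq_rpow {x : ℝ} (hx : 0 ≤ x) (hp : 0 ≤ p) (hz : z ∈ uD) :
    x ≤ x / (1 - ‖z‖ ^ 2) ^ p :=
  le_div_self hx (Real.rpow_pos_of_pos (one_sub_norm_sq_pos hz) p)
    (one_sub_norm_sq_rpow_le_one hp hz)

lemma inv_one_sub_norm_sq_rpow_le (hp : 0 ≤ p) (hz : z ∈ uD) :
    ((1 - ‖z‖ ^ 2) ^ p)⁻¹ ≤ (1 - ‖z‖) ^ (-p) := by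
  have h₁ : 0 < 1 - ‖z‖ := by linarith [mem_uD_iff.1 hz]
  rw [Real.rpow_neg h₁.le]
  exact inv_anti₀ (Real.rpow_pos_of_pos h₁ p)
    (Real.rpow_le_rpow h₁.le (by nlinarith [norm_nonneg z]) hp)

lemma one_sub_norm_rpow_neg_le (hp : 0 ≤ p) (hz : z ∈ uD) :
    (1 - ‖z‖) ^ (-p) ≤ 2 ^ p / (1 - ‖z‖ ^ 2) ^ p := by
  have h₁ : 0 < 1 - ‖z‖ := by linarith [mem_uD_iff.1 hz]
  have h₂ := Real.rpow_pos_of_pos (one_sub_norm_sq_pos hz) p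
  rw [Real.rpow_neg h₁.le, inv_le_iff_one_le_mul₀ (Real.rpow_pos_of_pos h₁ p),
    div_mul_eq_mul_div, le_div_iff₀ h₂, one_mul, ← Real.mul_rpow zero_le_two h₁.le]
  exact Real.rpow_le_rpow (one_sub_norm_sq_pos hz).le (by nlinarith [norm_nonneg z]) hp

end Weights

lemma norm_sub_le_of_norm_deriv_le {u : ℂ → ℂ} {γ K : ℝ} (hu : DifferentiableOn ℂ u uD)
    (hγ : 1 < γ) (hK : 0 ≤ K) (hbound : ∀ z ∈ uD, ‖deriv u z‖ ≤ K * (1 - ‖z‖) ^ (-γ))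
    {w : ℂ} (hw : w ∈ uD) : ‖u w - u 0‖ ≤ K / (γ - 1) * (1 - ‖w‖) ^ (1 - γ) := by
  set r := ‖w‖
  have hr : r < 1 := mem_uD_iff.1 hw
  have hpos : ∀ t ∈ Set.Icc (0 : ℝ) 1, 0 < 1 - t * r := fun t ht => by
    nlinarith [ht.2, norm_nonneg w]
  have hseg : ∀ t ∈ Set.Icc (0 : ℝ) 1, (t : ℂ) * w ∈ uD := fun t ht =>
    ofReal_mul_mem_uD ht.1 ht.2 hw
  have hderiv : ∀ t ∈ Set.Icc (0 : ℝ) 1,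
      HasDerivAt (fun s : ℝ => u (s * w) - u 0) (deriv u (t * w) * w) t := fun t ht =>
    ((((hu.analyticOnNhd Metric.isOpen_ball) _ (hseg t ht)).differentiableAt.hasDerivAt.comp
      (t : ℂ) (hasDerivAt_mul_const w)).comp_ofReal).sub_const (u 0)
  have hfence : ∀ t ∈ Set.Icc (0 : ℝ) 1, HasDerivAt (fun s => K / (γ - 1) * (1 - s * r) ^ (1 - γ))
      (K * r * (1 - t * r) ^ (-γ)) t := fun t ht => by
    have := (((hasDerivAt_id t).mul_const r).const_sub 1).rpow_const (p := 1 - γ)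
      (Or.inl (hpos t ht).ne')
    refine (this.const_mul (K / (γ - 1))).congr_deriv ?_
    rw [show 1 - γ - 1 = -γ by ring, id]
    field_simp [(by linarith : γ - 1 ≠ 0)]
    ring
  have key := image_norm_le_of_norm_deriv_right_le_deriv_boundary'
    (f := fun s : ℝ => u (s * w) - u 0) (a := 0) (b := 1)
    (fun t ht => (hderiv t ht).continuousAt.continuousWithinAt)
    (fun t ht => (hderiv t (Set.Ico_subset_Icc_self ht)).hasDerivWithinAt)
    (by simpa using div_nonneg hK (by linarith : (0 : ℝ) ≤ γ - 1))
    (fun t ht => (hfence t ht).continuousAt.continuousWithinAt)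
    (fun t ht => (hfence t (Set.Ico_subset_Icc_self ht)).hasDerivWithinAt)
    (fun t ht => by
      have ht' := Set.Ico_subset_Icc_self ht
      have hnorm : ‖(t : ℂ) * w‖ = t * r := by
        rw [norm_mul, Complex.norm_real, Real.norm_of_nonneg ht'.1]
      rw [norm_mul, mul_right_comm]
      exact mul_le_mul_of_nonneg_right (hnorm ▸ hbound _ (hseg t ht')) (norm_nonneg w))
    (Set.right_mem_Icc.2 zero_le_one)
  simpa using key

lemma norm_le_of_norm_deriv_le {u : ℂ → ℂ} {γ c N : ℝ} (hu : DifferentiableOn ℂ u uD)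
    (hγ : 1 < γ) (hc : 0 ≤ c) (h₀ : ‖u 0‖ ≤ N)
    (hbound : ∀ z ∈ uD, ‖deriv u z‖ ≤ c * N / (1 - ‖z‖ ^ 2) ^ γ) {w : ℂ} (hw : w ∈ uD) :
    ‖u w‖ ≤ (1 + 2 ^ (γ - 1) * c / (γ - 1)) * N / (1 - ‖w‖ ^ 2) ^ (γ - 1) := by
  have hN : 0 ≤ N := (norm_nonneg _).trans h₀
  have hcN : 0 ≤ c * N := mul_nonneg hc hN
  have hradial := norm_sub_le_of_norm_deriv_le hu hγ hcN (fun z hz =>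
    (hbound z hz).trans (by
      rw [div_eq_mul_inv]
      exact mul_le_mul_of_nonneg_left (inv_one_sub_norm_sq_rpow_le (by linarith) hz) hcN)) hw
  have hweight : (1 - ‖w‖) ^ (1 - γ) ≤ 2 ^ (γ - 1) / (1 - ‖w‖ ^ 2) ^ (γ - 1) := by
    simpa using one_sub_norm_rpow_neg_le (p := γ - 1) (by linarith) hw
  calc ‖u w‖ ≤ ‖u 0‖ + ‖u w - u 0‖ := norm_le_norm_add_norm_sub' _ _
    _ ≤ N / (1 - ‖w‖ ^ 2) ^ (γ - 1) + c * N / (γ - 1) * (2 ^ (γ - 1) / (1 - ‖w‖ ^ 2) ^ (γ - 1)) :=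
        add_le_add (h₀.trans (le_div_one_sub_norm_sq_rpow hN (by linarith) hw))
          (hradial.trans (mul_le_mul_of_nonneg_left hweight
            (div_nonneg hcN (by linarith))))
    _ = (1 + 2 ^ (γ - 1) * c / (γ - 1)) * N / (1 - ‖w‖ ^ 2) ^ (γ - 1) := by ring

section ZygmundNorm

variable {a : ℝ} {f : ℂ → ℂ} {z : ℂ}

lemma zygS_nonneg (hz : z ∈ uD) : 0 ≤ zygS a f z :=
  mul_nonneg (Real.rpow_nonneg (one_sub_norm_sq_pos hz).le _) (norm_nonneg _)

lemma zygS_le_sSup (hf : memZ a f) (hz : z ∈ uD) : zygS a f z ≤ sSup (zygS a f '' uD) := by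
  obtain ⟨M, hM⟩ := hf.2
  exact le_csSup ⟨M, Set.forall_mem_image.2 hM⟩ (Set.mem_image_of_mem _ hz)

lemma sSup_zygS_nonneg (hf : memZ a f) : 0 ≤ sSup (zygS a f '' uD) :=
  (zygS_nonneg zero_mem_uD).trans (zygS_le_sSup hf zero_mem_uD)

lemma norm_apply_zero_le_zNorm (hf : memZ a f) : ‖f 0‖ ≤ zNorm a f := by
  unfold zNorm
  linarith [norm_nonneg (deriv f 0), sSup_zygS_nonneg hf]

lemma norm_deriv_zero_le_zNorm (hf : memZ a f) : ‖deriv f 0‖ ≤ zNorm a f := by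
  unfold zNorm
  linarith [norm_nonneg (f 0), sSup_zygS_nonneg hf]

lemma zygS_le_zNorm (hf : memZ a f) (hz : z ∈ uD) : zygS a f z ≤ zNorm a f := by
  unfold zNorm
  linarith [norm_nonneg (f 0), norm_nonneg (deriv f 0), zygS_le_sSup hf hz]

lemma zNorm_le_of_bounds {A B E : ℝ} (hA : ‖f 0‖ ≤ A) (hB : ‖deriv f 0‖ ≤ B)
    (hE : ∀ z ∈ uD, zygS a f z ≤ E) : zNorm a f ≤ A + B + E := by
  have : sSup (zygS a f '' uD) ≤ E :=
    csSup_le (Set.image_nonempty.2 ⟨0, zero_mem_uD⟩) (Set.forall_mem_image.2 hE)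
  unfold zNorm
  linarith

lemma norm_deriv_deriv_le_zNorm (hf : memZ a f) (hz : z ∈ uD) :
    ‖deriv (deriv f) z‖ ≤ zNorm a f / (1 - ‖z‖ ^ 2) ^ a := by
  rw [le_div_iff₀ (Real.rpow_pos_of_pos (one_sub_norm_sq_pos hz) a), mul_comm]
  exact zygS_le_zNorm hf hz

lemma norm_deriv_le_zNorm (ha : 1 < a) (hf : memZ a f) (hz : z ∈ uD) :
    ‖deriv f z‖ ≤ (1 + 2 ^ (a - 1) / (a - 1)) * zNorm a f / (1 - ‖z‖ ^ 2) ^ (a - 1) := by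
  have := norm_le_of_norm_deriv_le (c := 1)
    (Metric.isOpen_ball.analyticOn_iff_analyticOnNhd.1 hf.1).deriv.differentiableOn ha
    zero_le_one (norm_deriv_zero_le_zNorm hf)
    (fun _ hw => by rw [one_mul]; exact norm_deriv_deriv_le_zNorm hf hw) hz
  rwa [mul_one] at this

lemma norm_le_zNorm (ha : 2 < a) (hf : memZ a f) (hz : z ∈ uD) :
    ‖f z‖ ≤ (1 + 2 ^ (a - 2) * (1 + 2 ^ (a - 1) / (a - 1)) / (a - 2)) * zNorm a f
      / (1 - ‖z‖ ^ 2) ^ (a - 2) := by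
  have := norm_le_of_norm_deriv_le (γ := a - 1) hf.1.differentiableOn (by linarith)
    (add_nonneg zero_le_one (div_nonneg (by positivity) (by linarith)))
    (norm_apply_zero_le_zNorm hf) (fun _ hw => norm_deriv_le_zNorm (by linarith) hf hw) hz
  rwa [sub_sub, one_add_one_eq_two] at this

end ZygmundNorm

section Operator

variable {φ g f : ℂ → ℂ} {z : ℂ}

lemma hasDerivAt_UgCphi (hφ : AnalyticOn ℂ φ uD) (hφm : Set.MapsTo φ uD uD)
    (hg : AnalyticOn ℂ g uD) (hf : AnalyticOn ℂ f uD) (hz : z ∈ uD) :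
    HasDerivAt (UgCphi g φ f) (f (φ z) * deriv g z) z :=
  hasDerivAt_radial_integral (h := fun w => f (φ w) * deriv g w)
    ((hf.differentiableOn.comp hφ.differentiableOn hφm).mul
      (Metric.isOpen_ball.analyticOn_iff_analyticOnNhd.1 hg).deriv.differentiableOn) hz

lemma analyticOn_UgCphi (hφ : AnalyticOn ℂ φ uD) (hφm : Set.MapsTo φ uD uD)
    (hg : AnalyticOn ℂ g uD) (hf : AnalyticOn ℂ f uD) : AnalyticOn ℂ (UgCphi g φ f) uD :=
  DifferentiableOn.analyticOn
    (fun _ hz => (hasDerivAt_UgCphi hφ hφm hg hf hz).differentiableAt.differentiableWithinAt)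
    Metric.isOpen_ball

lemma UgCphi_apply_zero : UgCphi g φ f 0 = 0 := by
  simp [UgCphi]

lemma zygS_UgCphi (β : ℝ) (hφ : AnalyticOn ℂ φ uD) (hφm : Set.MapsTo φ uD uD)
    (hg : AnalyticOn ℂ g uD) (hf : AnalyticOn ℂ f uD) (hz : z ∈ uD) :
    zygS β (UgCphi g φ f) z = (1 - ‖z‖ ^ 2) ^ β *
      ‖deriv f (φ z) * (deriv g z * deriv φ z) + f (φ z) * deriv (deriv g) z‖ := by
  have hderiv : deriv (UgCphi g φ f) =ᶠ[𝓝 z] fun w => f (φ w) * deriv g w :=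
    Filter.eventually_of_mem (Metric.isOpen_ball.mem_nhds hz) fun w hw =>
      (hasDerivAt_UgCphi hφ hφm hg hf hw).deriv
  have hfφ : HasDerivAt (fun w => f (φ w)) (deriv f (φ z) * deriv φ z) z :=
    (hf.differentiableOn.differentiableAt (Metric.isOpen_ball.mem_nhds (hφm hz))).hasDerivAt.comp z
      (hφ.differentiableOn.differentiableAt (Metric.isOpen_ball.mem_nhds hz)).hasDerivAt
  have hg' : HasDerivAt (deriv g) (deriv (deriv g) z) z :=
    ((Metric.isOpen_ball.analyticOn_iff_analyticOnNhd.1 hg).deriv z hz).differentiableAt.hasDerivAt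
  rw [zygS, hderiv.deriv_eq, (hfφ.fun_mul hg').deriv]
  ring_nf

end Operator

lemma mul_le_mul_of_le_div_of_div_le {x y A M d : ℝ} (hx : x ≤ A / d) (hy : y / d ≤ M)
    (hy₀ : 0 ≤ y) (hA : 0 ≤ A) : x * y ≤ A * M :=
  calc x * y ≤ A / d * y := mul_le_mul_of_nonneg_right hx hy₀
    _ = A * (y / d) := by ring
    _ ≤ A * M := mul_le_mul_of_nonneg_left hy hA

lemma zygS_UgCphi_le {α β C₁ C₂ M₁ M₂ : ℝ} {φ g f : ℂ → ℂ} {z : ℂ}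
    (hφ : AnalyticOn ℂ φ uD) (hφm : Set.MapsTo φ uD uD) (hg : AnalyticOn ℂ g uD)
    (hf : AnalyticOn ℂ f uD) (hz : z ∈ uD) (hC₁ : 0 ≤ C₁) (hC₂ : 0 ≤ C₂)
    (hf₁ : ‖deriv f (φ z)‖ ≤ C₁ / (1 - ‖φ z‖ ^ 2) ^ (α - 1))
    (hf₀ : ‖f (φ z)‖ ≤ C₂ / (1 - ‖φ z‖ ^ 2) ^ (α - 2))
    (hM₁ : (1 - ‖z‖ ^ 2) ^ β * ‖deriv g z * deriv φ z‖ / (1 - ‖φ z‖ ^ 2) ^ (α - 1) ≤ M₁)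
    (hM₂ : (1 - ‖z‖ ^ 2) ^ β * ‖deriv (deriv g) z‖ / (1 - ‖φ z‖ ^ 2) ^ (α - 2) ≤ M₂) :
    zygS β (UgCphi g φ f) z ≤ C₁ * M₁ + C₂ * M₂ := by
  have hw := Real.rpow_nonneg (one_sub_norm_sq_pos hz).le β
  rw [zygS_UgCphi β hφ hφm hg hf hz]
  calc (1 - ‖z‖ ^ 2) ^ β *
        ‖deriv f (φ z) * (deriv g z * deriv φ z) + f (φ z) * deriv (deriv g) z‖
      ≤ ‖deriv f (φ z)‖ * ((1 - ‖z‖ ^ 2) ^ β * ‖deriv g z * deriv φ z‖)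
        + ‖f (φ z)‖ * ((1 - ‖z‖ ^ 2) ^ β * ‖deriv (deriv g) z‖) := by
        refine (mul_le_mul_of_nonneg_left (norm_add_le _ _) hw).trans_eq ?_
        simp only [norm_mul]
        ring
    _ ≤ C₁ * M₁ + C₂ * M₂ :=
        add_le_add (mul_le_mul_of_le_div_of_div_le hf₁ hM₁ (by positivity) hC₁)
          (mul_le_mul_of_le_div_of_div_le hf₀ hM₂ (by positivity) hC₂)

theorem boundedOp_UgCphi_of_bounds {α β : ℝ} {φ g : ℂ → ℂ} (hα : 2 < α)
    (hφ : AnalyticOn ℂ φ uD) (hφm : Set.MapsTo φ uD uD) (hg : AnalyticOn ℂ g uD)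
    (h₁ : ∃ M : ℝ, ∀ z ∈ uD,
      (1 - ‖z‖ ^ 2) ^ β * ‖deriv g z * deriv φ z‖ / (1 - ‖φ z‖ ^ 2) ^ (α - 1) ≤ M)
    (h₂ : ∃ M : ℝ, ∀ z ∈ uD,
      (1 - ‖z‖ ^ 2) ^ β * ‖deriv (deriv g) z‖ / (1 - ‖φ z‖ ^ 2) ^ (α - 2) ≤ M) :
    boundedOp α β (UgCphi g φ) := by
  obtain ⟨M₁, hM₁⟩ := h₁
  obtain ⟨M₂, hM₂⟩ := h₂
  set C₁ := 1 + 2 ^ (α - 1) / (α - 1)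
  set C₂ := 1 + 2 ^ (α - 2) * C₁ / (α - 2)
  have hC₁ : 0 ≤ C₁ := add_nonneg zero_le_one (div_nonneg (by positivity) (by linarith))
  have hC₂ : 0 ≤ C₂ := add_nonneg zero_le_one (div_nonneg (by positivity) (by linarith))
  have hzyg : ∀ f, memZ α f → ∀ z ∈ uD,
      zygS β (UgCphi g φ f) z ≤ (C₁ * M₁ + C₂ * M₂) * zNorm α f := fun f hf z hz => by
    have hN := (norm_nonneg (f 0)).trans (norm_apply_zero_le_zNorm hf)
    refine (zygS_UgCphi_le hφ hφm hg hf.1 hz (mul_nonneg hC₁ hN) (mul_nonneg hC₂ hN)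
      (norm_deriv_le_zNorm (by linarith) hf (hφm hz)) (norm_le_zNorm hα hf (hφm hz))
      (hM₁ z hz) (hM₂ z hz)).trans_eq ?_
    ring
  set C₀ := C₂ / (1 - ‖φ 0‖ ^ 2) ^ (α - 2) * ‖deriv g 0‖
  refine ⟨fun f hf => ⟨analyticOn_UgCphi hφ hφm hg hf.1, _, hzyg f hf⟩,
    max (C₀ + (C₁ * M₁ + C₂ * M₂)) 1, lt_max_of_lt_right one_pos, fun f hf => ?_⟩
  have hN := (norm_nonneg (f 0)).trans (norm_apply_zero_le_zNorm hf)
  have hB : ‖deriv (UgCphi g φ f) 0‖ ≤ C₀ * zNorm α f := by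
    rw [(hasDerivAt_UgCphi hφ hφm hg hf.1 zero_mem_uD).deriv, norm_mul]
    calc ‖f (φ 0)‖ * ‖deriv g 0‖
        ≤ C₂ * zNorm α f / (1 - ‖φ 0‖ ^ 2) ^ (α - 2) * ‖deriv g 0‖ :=
          mul_le_mul_of_nonneg_right (norm_le_zNorm hα hf (hφm zero_mem_uD)) (norm_nonneg _)
      _ = C₀ * zNorm α f := by ring
  calc zNorm β (UgCphi g φ f) ≤ 0 + C₀ * zNorm α f + (C₁ * M₁ + C₂ * M₂) * zNorm α f :=
        zNorm_le_of_bounds (by simp [UgCphi_apply_zero]) hB (hzyg f hf)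
    _ = (C₀ + (C₁ * M₁ + C₂ * M₂)) * zNorm α f := by ring
    _ ≤ max (C₀ + (C₁ * M₁ + C₂ * M₂)) 1 * zNorm α f :=
        mul_le_mul_of_nonneg_right (le_max_left _ _) hN

def invPow (a : ℂ) (s : ℝ) (z : ℂ) : ℂ := (1 - conj a * z) ^ (-(s : ℂ))

section InvPow

variable {a z : ℂ} {s : ℝ}

lemma one_sub_conj_mul_mem_slitPlane (ha : a ∈ uD) (hz : z ∈ uD) :
    1 - conj a * z ∈ Complex.slitPlane := by
  have h : ‖conj a * z‖ < 1 := by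
    rw [norm_mul, Complex.norm_conj]
    exact mul_lt_one_of_nonneg_of_lt_one_left (norm_nonneg a) (mem_uD_iff.1 ha)
      (mem_uD_iff.1 hz).le
  left
  simp only [Complex.sub_re, Complex.one_re]
  linarith [Complex.re_le_norm (conj a * z)]

lemma hasDerivAt_invPow (ha : a ∈ uD) (hz : z ∈ uD) :
    HasDerivAt (invPow a s) (s * conj a * invPow a (s + 1) z) z := by
  have h := (((hasDerivAt_id z).const_mul (conj a)).const_sub 1).cpow_const (c := -(s : ℂ))
    (one_sub_conj_mul_mem_slitPlane ha hz)
  refine h.congr_deriv ?_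
  simp only [invPow, id]
  push_cast
  ring_nf

lemma deriv_deriv_invPow (ha : a ∈ uD) (hz : z ∈ uD) :
    deriv (deriv (invPow a s)) z = s * (s + 1) * conj a ^ 2 * invPow a (s + 2) z := by
  have hderiv : deriv (invPow a s) =ᶠ[𝓝 z] fun w => s * conj a * invPow a (s + 1) w :=
    Filter.eventually_of_mem (Metric.isOpen_ball.mem_nhds hz) fun w hw =>
      (hasDerivAt_invPow ha hw).deriv
  rw [hderiv.deriv_eq, ((hasDerivAt_invPow (s := s + 1) ha hz).const_mul _).deriv,
    add_assoc, one_add_one_eq_two]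
  push_cast
  ring

lemma norm_invPow : ‖invPow a s z‖ = ‖1 - conj a * z‖ ^ (-s) := by
  rw [invPow, ← Complex.ofReal_neg, Complex.norm_cpow_real]

lemma invPow_self (ha : a ∈ uD) : invPow a s a = ((1 - ‖a‖ ^ 2) ^ (-s) : ℝ) := by
  rw [invPow, mul_comm, Complex.mul_conj', ← Complex.ofReal_neg, ← Complex.ofReal_pow,
    ← Complex.ofReal_one, ← Complex.ofReal_sub,
    Complex.ofReal_cpow (one_sub_norm_sq_pos ha).le]

end InvPow

lemma one_sub_norm_sq_le_two_mul_norm_one_sub_conj_mul {a z : ℂ} (ha : a ∈ uD) (hz : z ∈ uD) :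
    1 - ‖a‖ ^ 2 ≤ 2 * ‖1 - conj a * z‖ ∧ 1 - ‖z‖ ^ 2 ≤ 2 * ‖1 - conj a * z‖ := by
  have h : 1 - ‖a‖ * ‖z‖ ≤ ‖1 - conj a * z‖ := by
    simpa using norm_sub_norm_le (1 : ℂ) (conj a * z)
  have ha' := mem_uD_iff.1 ha
  have hz' := mem_uD_iff.1 hz
  constructor <;> nlinarith [norm_nonneg a, norm_nonneg z]

lemma one_sub_norm_sq_rpow_mul_norm_invPow_le {a z : ℂ} {α c : ℝ} (hα : 0 ≤ α) (hc : 0 ≤ c)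
    (ha : a ∈ uD) (hz : z ∈ uD) :
    (1 - ‖z‖ ^ 2) ^ α * (1 - ‖a‖ ^ 2) ^ c * ‖invPow a (α + c) z‖ ≤ 2 ^ (α + c) := by
  set D := ‖1 - conj a * z‖
  have hD : 0 < D := norm_pos_iff.2 (Complex.slitPlane_ne_zero
    (one_sub_conj_mul_mem_slitPlane ha hz))
  obtain ⟨haD, hzD⟩ := one_sub_norm_sq_le_two_mul_norm_one_sub_conj_mul ha hz
  have ha₀ := (one_sub_norm_sq_pos ha).le
  have hz₀ := (one_sub_norm_sq_pos hz).le
  calc (1 - ‖z‖ ^ 2) ^ α * (1 - ‖a‖ ^ 2) ^ c * ‖invPow a (α + c) z‖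
      ≤ (2 * D) ^ α * (2 * D) ^ c * D ^ (-(α + c)) := by
        rw [norm_invPow]
        gcongr
    _ = 2 ^ (α + c) := by
        rw [← Real.rpow_add (by positivity), Real.mul_rpow zero_le_two hD.le, mul_assoc,
          ← Real.rpow_add hD, add_neg_cancel, Real.rpow_zero, mul_one]

/-- The test functions `(1 - |a|²)^c / (1 - ā z)^(α + c - 2)`: the factor `(1 - |a|²)^c` makes
their `Z^α` norms bounded uniformly in `a ∈ D`. -/
def testFn (α c : ℝ) (a z : ℂ) : ℂ := ((1 - ‖a‖ ^ 2) ^ c : ℝ) * invPow a (α + c - 2) z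

section TestFn

variable {α c : ℝ} {a : ℂ}

lemma hasDerivAt_testFn (ha : a ∈ uD) {z : ℂ} (hz : z ∈ uD) :
    HasDerivAt (testFn α c a)
      (((1 - ‖a‖ ^ 2) ^ c : ℝ) * ((α + c - 2 : ℝ) * conj a * invPow a (α + c - 2 + 1) z)) z :=
  (hasDerivAt_invPow ha hz).const_mul _

lemma zygS_testFn_le (hα : 0 ≤ α) (hc : 0 ≤ c) (ha : a ∈ uD) {z : ℂ} (hz : z ∈ uD) :
    zygS α (testFn α c a) z ≤ |(α + c - 2) * (α + c - 1)| * 2 ^ (α + c) := by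
  have hk : 0 ≤ (1 - ‖a‖ ^ 2) ^ c := Real.rpow_nonneg (one_sub_norm_sq_pos ha).le c
  have ha₁ : ‖a‖ ^ 2 ≤ 1 := pow_le_one₀ (norm_nonneg a) (mem_uD_iff.1 ha).le
  unfold zygS testFn
  rw [deriv_const_mul_field', deriv_const_mul_field']
  dsimp only
  rw [deriv_deriv_invPow ha hz, show α + c - 2 + 2 = α + c by ring]
  simp only [norm_mul, norm_pow, Complex.norm_real, Complex.norm_conj, Real.norm_of_nonneg hk,
    Real.norm_eq_abs]
  calc (1 - ‖z‖ ^ 2) ^ α * ((1 - ‖a‖ ^ 2) ^ c *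
        (|α + c - 2| * ‖((α + c - 2 : ℝ) : ℂ) + 1‖ * ‖a‖ ^ 2 * ‖invPow a (α + c) z‖))
      = |(α + c - 2) * (α + c - 1)| * ‖a‖ ^ 2 *
        ((1 - ‖z‖ ^ 2) ^ α * (1 - ‖a‖ ^ 2) ^ c * ‖invPow a (α + c) z‖) := by
        rw [show ((α + c - 2 : ℝ) : ℂ) + 1 = ((α + c - 1 : ℝ) : ℂ) by push_cast; ring,
          Complex.norm_real, Real.norm_eq_abs, abs_mul]
        ring
    _ ≤ |(α + c - 2) * (α + c - 1)| * 1 * 2 ^ (α + c) := by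
        have hz₀ := Real.rpow_nonneg (one_sub_norm_sq_pos hz).le α
        gcongr
        exact one_sub_norm_sq_rpow_mul_norm_invPow_le hα hc ha hz
    _ = |(α + c - 2) * (α + c - 1)| * 2 ^ (α + c) := by ring

lemma analyticOn_testFn (ha : a ∈ uD) : AnalyticOn ℂ (testFn α c a) uD :=
  DifferentiableOn.analyticOn
    (fun _ hz => (hasDerivAt_testFn ha hz).differentiableAt.differentiableWithinAt)
    Metric.isOpen_ball

lemma memZ_testFn (hα : 0 ≤ α) (hc : 0 ≤ c) (ha : a ∈ uD) : memZ α (testFn α c a) :=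
  ⟨analyticOn_testFn ha, _, fun _ hz => zygS_testFn_le hα hc ha hz⟩

lemma zNorm_testFn_le (hα : 0 ≤ α) (hc : 0 ≤ c) (ha : a ∈ uD) :
    zNorm α (testFn α c a) ≤
      1 + |α + c - 2| + |(α + c - 2) * (α + c - 1)| * 2 ^ (α + c) := by
  have hk : (1 - ‖a‖ ^ 2) ^ c ≤ 1 := one_sub_norm_sq_rpow_le_one hc ha
  have hk₀ : 0 ≤ (1 - ‖a‖ ^ 2) ^ c := Real.rpow_nonneg (one_sub_norm_sq_pos ha).le c
  have ha₁ : ‖a‖ ≤ 1 := (mem_uD_iff.1 ha).le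
  refine zNorm_le_of_bounds ?_ ?_ fun _ hz => zygS_testFn_le hα hc ha hz
  · simpa [testFn, invPow, Real.norm_of_nonneg hk₀] using hk
  · rw [(hasDerivAt_testFn ha zero_mem_uD).deriv]
    simp only [invPow, mul_zero, sub_zero, Complex.one_cpow, mul_one, norm_mul,
      Complex.norm_real, Complex.norm_conj, Real.norm_of_nonneg hk₀, Real.norm_eq_abs]
    calc (1 - ‖a‖ ^ 2) ^ c * (|α + c - 2| * ‖a‖) ≤ 1 * (|α + c - 2| * 1) := by gcongr
      _ = |α + c - 2| := by ring

lemma testFn_self (ha : a ∈ uD) : testFn α c a a = (((1 - ‖a‖ ^ 2) ^ (α - 2))⁻¹ : ℝ) := by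
  have hd := one_sub_norm_sq_pos ha
  rw [testFn, invPow_self ha, ← Complex.ofReal_mul, ← Real.rpow_add hd, ← Real.rpow_neg hd.le]
  ring_nf

lemma deriv_testFn_self (ha : a ∈ uD) :
    deriv (testFn α c a) a =
      (α + c - 2 : ℝ) * conj a * (((1 - ‖a‖ ^ 2) ^ (α - 1))⁻¹ : ℝ) := by
  have hd := one_sub_norm_sq_pos ha
  rw [(hasDerivAt_testFn ha ha).deriv, invPow_self ha, ← Real.rpow_neg hd.le]
  rw [mul_left_comm, ← mul_assoc, mul_assoc _ (((1 - ‖a‖ ^ 2) ^ c : ℝ) : ℂ),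
    ← Complex.ofReal_mul, ← Real.rpow_add hd]
  ring_nf

end TestFn

lemma zygS_id (a : ℝ) (z : ℂ) : zygS a id z = 0 := by
  simp [zygS]

lemma memZ_id (a : ℝ) : memZ a id :=
  ⟨analyticOn_id, 0, fun z _ => (zygS_id a z).le⟩

lemma zNorm_id_le (a : ℝ) : zNorm a id ≤ 1 := by
  simpa using zNorm_le_of_bounds (A := 0) (B := 1) (E := 0) (by simp) (by simp)
    fun z _ => (zygS_id a z).le

lemma norm_le_of_norm_mul_add_le {X Y : ℂ} {p q A B : ℝ} (hpq : q = p + 1)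
    (hA : ‖(p : ℂ) * X + Y‖ ≤ A) (hB : ‖(q : ℂ) * X + Y‖ ≤ B) :
    ‖X‖ ≤ A + B ∧ ‖Y‖ ≤ A + |p| * (A + B) := by
  have hX : ‖X‖ ≤ A + B := by
    have : X = ((q : ℂ) * X + Y) - ((p : ℂ) * X + Y) := by rw [hpq]; push_cast; ring
    rw [this]
    linarith [norm_sub_le ((q : ℂ) * X + Y) ((p : ℂ) * X + Y)]
  refine ⟨hX, ?_⟩
  have : Y = ((p : ℂ) * X + Y) - (p : ℂ) * X := by ring
  rw [this]
  calc ‖(p : ℂ) * X + Y - (p : ℂ) * X‖ ≤ A + |p| * ‖X‖ := by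
        refine (norm_sub_le _ _).trans (add_le_add hA ?_)
        rw [norm_mul, Complex.norm_real, Real.norm_eq_abs]
    _ ≤ A + |p| * (A + B) := by gcongr

section Necessity

variable {α β : ℝ} {φ g : ℂ → ℂ}

lemma zygS_UgCphi_testFn {c : ℝ} (hφ : AnalyticOn ℂ φ uD) (hφm : Set.MapsTo φ uD uD)
    (hg : AnalyticOn ℂ g uD) {z : ℂ} (hz : z ∈ uD) :
    zygS β (UgCphi g φ (testFn α c (φ z))) z = ‖((α + c - 2 : ℝ) : ℂ) *
        ((((1 - ‖z‖ ^ 2) ^ β / (1 - ‖φ z‖ ^ 2) ^ (α - 1) : ℝ) : ℂ) *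
          (conj (φ z) * (deriv g z * deriv φ z))) +
      (((1 - ‖z‖ ^ 2) ^ β / (1 - ‖φ z‖ ^ 2) ^ (α - 2) : ℝ) : ℂ) * deriv (deriv g) z‖ := by
  have hw := Real.rpow_nonneg (one_sub_norm_sq_pos hz).le β
  rw [zygS_UgCphi β hφ hφm hg (analyticOn_testFn (hφm hz)) hz, testFn_self (hφm hz),
    deriv_testFn_self (hφm hz)]
  conv_lhs => rw [← Real.norm_of_nonneg hw, ← Complex.norm_real, ← norm_mul]
  congr 1
  push_cast
  ring

lemma exists_bounds_of_zygS_UgCphi_le {C : ℝ} (hC : 0 ≤ C) (hα : 0 ≤ α)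
    (hφ : AnalyticOn ℂ φ uD) (hφm : Set.MapsTo φ uD uD) (hg : AnalyticOn ℂ g uD)
    (hT : ∀ f, memZ α f → ∀ z ∈ uD, zygS β (UgCphi g φ f) z ≤ C * zNorm α f) :
    ∃ A B : ℝ, ∀ z ∈ uD,
      (1 - ‖z‖ ^ 2) ^ β / (1 - ‖φ z‖ ^ 2) ^ (α - 1) * (‖φ z‖ * ‖deriv g z * deriv φ z‖) ≤ A ∧
      (1 - ‖z‖ ^ 2) ^ β * ‖deriv (deriv g) z‖ / (1 - ‖φ z‖ ^ 2) ^ (α - 2) ≤ B := by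
  set K : ℝ → ℝ := fun c => C * (1 + |α + c - 2| + |(α + c - 2) * (α + c - 1)| * 2 ^ (α + c))
  have htest : ∀ c, 0 ≤ c → ∀ z ∈ uD, zygS β (UgCphi g φ (testFn α c (φ z))) z ≤ K c :=
    fun c hc z hz => (hT _ (memZ_testFn hα hc (hφm hz)) z hz).trans
      (mul_le_mul_of_nonneg_left (zNorm_testFn_le hα hc (hφm hz)) hC)
  refine ⟨K 0 + K 1, K 0 + |α + 0 - 2| * (K 0 + K 1), fun z hz => ?_⟩
  have h₀ := htest 0 le_rfl z hz
  have h₁ := htest 1 zero_le_one z hz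
  rw [zygS_UgCphi_testFn hφ hφm hg hz] at h₀ h₁
  obtain ⟨hX, hY⟩ := norm_le_of_norm_mul_add_le (by ring) h₀ h₁
  have hw := Real.rpow_nonneg (one_sub_norm_sq_pos hz).le β
  have hd := (one_sub_norm_sq_pos (hφm hz)).le
  rw [norm_mul, norm_mul, Complex.norm_real, Complex.norm_conj,
    Real.norm_of_nonneg (by positivity)] at hX
  rw [norm_mul, Complex.norm_real, Real.norm_of_nonneg (by positivity)] at hY
  exact ⟨hX, by rwa [mul_div_right_comm]⟩

lemma norm_deriv_mul_le_of_zygS_UgCphi_id_le {C : ℝ} (hφ : AnalyticOn ℂ φ uD)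
    (hφm : Set.MapsTo φ uD uD) (hg : AnalyticOn ℂ g uD) {z : ℂ} (hz : z ∈ uD)
    (hid : zygS β (UgCphi g φ id) z ≤ C) :
    (1 - ‖z‖ ^ 2) ^ β * ‖deriv g z * deriv φ z‖ ≤
      C + (1 - ‖z‖ ^ 2) ^ β * ‖deriv (deriv g) z‖ := by
  have hw := Real.rpow_nonneg (one_sub_norm_sq_pos hz).le β
  rw [zygS_UgCphi (f := id) β hφ hφm hg analyticOn_id hz, deriv_id, one_mul, id] at hid
  have hsplit := norm_sub_le (deriv g z * deriv φ z + φ z * deriv (deriv g) z)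
    (φ z * deriv (deriv g) z)
  rw [add_sub_cancel_right, norm_mul (φ z)] at hsplit
  have hφQ : ‖φ z‖ * ‖deriv (deriv g) z‖ ≤ ‖deriv (deriv g) z‖ :=
    mul_le_of_le_one_left (norm_nonneg _) (mem_uD_iff.1 (hφm hz)).le
  nlinarith

theorem bounds_of_boundedOp_UgCphi (hα : 2 ≤ α)
    (hφ : AnalyticOn ℂ φ uD) (hφm : Set.MapsTo φ uD uD) (hg : AnalyticOn ℂ g uD)
    (hT : boundedOp α β (UgCphi g φ)) :
    (∃ M : ℝ, ∀ z ∈ uD,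
      (1 - ‖z‖ ^ 2) ^ β * ‖deriv g z * deriv φ z‖ / (1 - ‖φ z‖ ^ 2) ^ (α - 1) ≤ M) ∧
    (∃ M : ℝ, ∀ z ∈ uD,
      (1 - ‖z‖ ^ 2) ^ β * ‖deriv (deriv g) z‖ / (1 - ‖φ z‖ ^ 2) ^ (α - 2) ≤ M) := by
  obtain ⟨hmem, C, hC, hbound⟩ := hT
  have hzyg : ∀ f, memZ α f → ∀ z ∈ uD, zygS β (UgCphi g φ f) z ≤ C * zNorm α f :=
    fun f hf z hz => (zygS_le_zNorm (hmem f hf) hz).trans (hbound f hf)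
  obtain ⟨A, B, hAB⟩ := exists_bounds_of_zygS_UgCphi_le hC.le (by linarith) hφ hφm hg hzyg
  refine ⟨⟨max (2 * A) ((C + B) / (3 / 4) ^ (α - 1)), fun z hz => ?_⟩,
    ⟨B, fun z hz => (hAB z hz).2⟩⟩
  have hw := Real.rpow_nonneg (one_sub_norm_sq_pos hz).le β
  have hd := one_sub_norm_sq_pos (hφm hz)
  rcases le_or_gt (1 / 2) ‖φ z‖ with hφz | hφz
  · refine le_max_of_le_left ?_
    calc (1 - ‖z‖ ^ 2) ^ β * ‖deriv g z * deriv φ z‖ / (1 - ‖φ z‖ ^ 2) ^ (α - 1)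
        = (1 - ‖z‖ ^ 2) ^ β / (1 - ‖φ z‖ ^ 2) ^ (α - 1) * ‖deriv g z * deriv φ z‖ * 1 := by
          ring
      _ ≤ (1 - ‖z‖ ^ 2) ^ β / (1 - ‖φ z‖ ^ 2) ^ (α - 1) * ‖deriv g z * deriv φ z‖ *
          (2 * ‖φ z‖) := by gcongr; linarith
      _ = 2 * ((1 - ‖z‖ ^ 2) ^ β / (1 - ‖φ z‖ ^ 2) ^ (α - 1) *
          (‖φ z‖ * ‖deriv g z * deriv φ z‖)) := by ring
      _ ≤ 2 * A := by linarith [(hAB z hz).1]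
  · refine le_max_of_le_right ?_
    have hP := norm_deriv_mul_le_of_zygS_UgCphi_id_le hφ hφm hg hz
      ((hzyg id (memZ_id α) z hz).trans (mul_le_of_le_one_right hC.le (zNorm_id_le α)))
    replace hP := hP.trans (add_le_add le_rfl ((le_div_one_sub_norm_sq_rpow (by positivity)
      (by linarith) (hφm hz)).trans (hAB z hz).2))
    have hdα : (3 / 4 : ℝ) ^ (α - 1) ≤ (1 - ‖φ z‖ ^ 2) ^ (α - 1) :=
      Real.rpow_le_rpow (by norm_num) (by nlinarith [norm_nonneg (φ z)]) (by linarith)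
    exact div_le_div₀ ((by positivity : (0 : ℝ) ≤ _).trans hP) hP (by positivity) hdα

end Necessity

theorem stmt_15_general (α β : ℝ) (hα : 2 < α)
    (φ g : ℂ → ℂ) (hφ : AnalyticOn ℂ φ uD) (hφm : Set.MapsTo φ uD uD)
    (hg : AnalyticOn ℂ g uD) :
    boundedOp α β (UgCphi g φ) ↔
      ((∃ M : ℝ, ∀ z ∈ uD, (1 - ‖z‖ ^ 2) ^ β * ‖deriv g z * deriv φ z‖ / (1 - ‖φ z‖ ^ 2) ^ (α - 1) ≤ M) ∧ (∃ M : ℝ, ∀ z ∈ uD, (1 - ‖z‖ ^ 2) ^ β * ‖deriv (deriv g) z‖ / (1 - ‖φ z‖ ^ 2) ^ (α - 2) ≤ M)) :=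
  ⟨bounds_of_boundedOp_UgCphi hα.le hφ hφm hg,
    fun h => boundedOp_UgCphi_of_bounds hα hφ hφm hg h.1 h.2⟩

theorem stmt_15 (α β : ℝ) (hα : 2 < α) (hβ : 0 < β)
    (φ g : ℂ → ℂ) (hφ : AnalyticOn ℂ φ uD) (hφm : Set.MapsTo φ uD uD)
    (hg : AnalyticOn ℂ g uD) :
    boundedOp α β (UgCphi g φ) ↔
      ((∃ M : ℝ, ∀ z ∈ uD, (1 - ‖z‖ ^ 2) ^ β * ‖deriv g z * deriv φ z‖ / (1 - ‖φ z‖ ^ 2) ^ (α - 1) ≤ M) ∧ (∃ M : ℝ, ∀ z ∈ uD, (1 - ‖z‖ ^ 2) ^ β * ‖deriv (deriv g) z‖ / (1 - ‖φ z‖ ^ 2) ^ (α - 2) ≤ M)) :=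
  stmt_15_general α β hα φ g hφ hφm hg
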